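/- arXiv:0912.1476 — 2 statements merged into one kernel-verified Lean document; each statement's English description precedes it below -/
import Mathlib

section
/- Let V be a finite-dimensional real inner product space, N : V → V a nilpotent linear operator, H : V → V a diagonalizable linear operator with real eigenvalues, and X ∈ V a nonzero vector. Write X = Σ_α X_α as a sum of eigenvectors of H with eigenvalues α, and let λ = max{α : X_α ≠ 0}. Let Y = Σ_{α = λ} X_α and l = max{n : Nⁿ Y ≠ 0}. Then lim_{t→∞} ‖exp(tN) exp(tH) X‖ / ((e^{λt} t^l / l!)·‖Nˡ Y‖) = 1, and consequently lim_{t→∞} (1/t) log ‖exp(tN) exp(tH) X‖ = λ. -/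
/-!
Expanding `X` in eigenvectors of `H` and `exp (t • N)` as a finite sum,
`exp (t • N) (exp (t • H) X) = ∑ α ∑ n, (e^{αt} tⁿ / n!) • Nⁿ X_α`.
Among the pairs `(α, n)` with `Nⁿ X_α ≠ 0`, `(λ, l)` is the lexicographically largest, and a
lexicographically smaller pair has a weight `e^{αt} tⁿ / n!` that is negligible against
`e^{λt} tˡ / l!`. So the vector divided by the latter weight tends to `Nˡ Y ≠ 0`, which gives the
first limit; the second follows because `log (e^{λt} tˡ / l!) / t → λ`.
-/

open Filter Topology NormedSpace Asymptotics
open scoped Nat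

noncomputable def expPolyWeight (α : ℝ) (n : ℕ) (t : ℝ) : ℝ :=
  Real.exp (α * t) * t ^ n / n !

theorem expPolyWeight_pos (α : ℝ) (n : ℕ) {t : ℝ} (ht : 0 < t) : 0 < expPolyWeight α n t := by
  unfold expPolyWeight
  positivity

theorem isLittleO_exp_mul_pow_of_lex_lt {α β : ℝ} {n l : ℕ} (h : α < β ∨ α = β ∧ n < l) :
    (fun t => Real.exp (α * t) * t ^ n) =o[atTop] fun t => Real.exp (β * t) * t ^ l := by
  rcases h with hlt | ⟨rfl, hnl⟩
  · have hexp : (fun t => Real.exp (β * t)) =O[atTop] fun t => Real.exp (β * t) * t ^ l := by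
      refine IsBigO.of_bound 1 ?_
      filter_upwards [eventually_ge_atTop 1] with t ht
      simp only [Real.norm_eq_abs, abs_mul, abs_pow, abs_of_pos (Real.exp_pos _), one_mul]
      exact le_mul_of_one_le_right (Real.exp_pos _).le (one_le_pow₀ (ht.trans (le_abs_self t)))
    simpa only [Real.rpow_natCast] using
      (isLittleO_exp_mul_rpow_of_lt (n : ℝ) hlt).trans_isBigO hexp
  · exact (isBigO_refl _ _).mul_isLittleO (isLittleO_pow_pow_atTop_of_lt hnl)

theorem tendsto_expPolyWeight_div_expPolyWeight {α β : ℝ} {n l : ℕ}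
    (h : α < β ∨ α = β ∧ n < l) :
    Tendsto (fun t => expPolyWeight α n t / expPolyWeight β l t) atTop (𝓝 0) := by
  have := (isLittleO_exp_mul_pow_of_lex_lt h).tendsto_div_nhds_zero.const_mul ((l ! : ℝ) / n !)
  rw [mul_zero] at this
  refine this.congr fun t => ?_
  simp only [expPolyWeight, div_eq_mul_inv, mul_inv, inv_inv]
  ring

theorem tendsto_log_expPolyWeight_div (α : ℝ) (n : ℕ) :
    Tendsto (fun t => Real.log (expPolyWeight α n t) / t) atTop (𝓝 α) := by
  have hlog : Tendsto (fun t => Real.log t / t) atTop (𝓝 0) :=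
    Real.isLittleO_log_id_atTop.tendsto_div_nhds_zero
  have hconst : Tendsto (fun t => Real.log (n ! : ℝ) / t) atTop (𝓝 0) :=
    tendsto_const_nhds.div_atTop tendsto_id
  have := (tendsto_const_nhds (x := α)).add ((hlog.const_mul (n : ℝ)).sub hconst)
  rw [mul_zero, sub_zero, add_zero] at this
  refine this.congr' ?_
  filter_upwards [eventually_gt_atTop 0] with t ht
  rw [expPolyWeight, Real.log_div (by positivity) (by positivity),
    Real.log_mul (Real.exp_ne_zero _) (by positivity), Real.log_exp, Real.log_pow]
  field_simp
  ring

theorem exp_smul_eq_sum_of_pow_eq_zero {𝔸 : Type*} [NormedRing 𝔸] [NormedAlgebra ℝ 𝔸] {x : 𝔸}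
    {m : ℕ} (hx : x ^ m = 0) (t : ℝ) :
    exp (t • x) = ∑ n ∈ Finset.range m, (t ^ n / n !) • x ^ n := by
  rw [exp_eq_tsum (𝕂 := ℝ)]
  refine (tsum_eq_sum fun n hn => ?_).trans (Finset.sum_congr rfl fun n _ => ?_)
  · rw [smul_pow, pow_eq_zero_of_le (by simpa using hn) hx, smul_zero, smul_zero]
  · rw [smul_pow, smul_smul, div_eq_inv_mul]

section

variable {V : Type*} [NormedAddCommGroup V] [NormedSpace ℝ V]

theorem exp_apply_of_apply_eq_smul [CompleteSpace V] (A : V →L[ℝ] V) {μ : ℝ} {v : V}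
    (h : A v = μ • v) : exp A v = Real.exp μ • v := by
  have hpow : ∀ n : ℕ, (A ^ n) v = μ ^ n • v := by
    intro n
    induction n with
    | zero => simp
    | succ n ih => rw [pow_succ', mul_apply_eq_comp, ih, map_smul, h, smul_smul, pow_succ]
  refine ((exp_series_hasSum_exp' (𝕂 := ℝ) A).mapL (ContinuousLinearMap.apply ℝ V v)).unique ?_
  rw [Real.exp_eq_exp_ℝ]
  simpa [hpow, smul_smul] using (exp_series_hasSum_exp' (𝕂 := ℝ) μ).smul_const v

theorem exp_smul_apply_exp_smul_apply_sum [CompleteSpace V] {N H : V →L[ℝ] V} {m : ℕ}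
    (hm : N ^ m = 0) {S : Finset ℝ} {comp : ℝ → V} (heig : ∀ α ∈ S, H (comp α) = α • comp α)
    (t : ℝ) :
    exp (t • N) (exp (t • H) (∑ α ∈ S, comp α)) =
      ∑ α ∈ S, ∑ n ∈ Finset.range m, expPolyWeight α n t • (N ^ n) (comp α) := by
  rw [map_sum, map_sum]
  refine Finset.sum_congr rfl fun α hα => ?_
  rw [exp_apply_of_apply_eq_smul (t • H) (μ := α * t) (by
      rw [smul_apply, heig α hα, smul_smul, mul_comm]),
    map_smul, exp_smul_eq_sum_of_pow_eq_zero hm, sum_apply, Finset.smul_sum]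
  refine Finset.sum_congr rfl fun n _ => ?_
  rw [smul_apply, smul_smul, expPolyWeight, mul_div_assoc]

theorem tendsto_inv_expPolyWeight_smul_sum {S : Finset ℝ} {m : ℕ} {v : ℝ → ℕ → V} {lam : ℝ}
    {l : ℕ} (hlam : lam ∈ S) (hl : l < m)
    (hdom : ∀ α ∈ S, ∀ n, v α n ≠ 0 → α < lam ∨ α = lam ∧ n ≤ l) :
    Tendsto (fun t => (expPolyWeight lam l t)⁻¹ •
      ∑ α ∈ S, ∑ n ∈ Finset.range m, expPolyWeight α n t • v α n) atTop (𝓝 (v lam l)) := by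
  have hterm : ∀ α ∈ S, ∀ n ∈ Finset.range m, Tendsto
      (fun t => (expPolyWeight lam l t)⁻¹ • (expPolyWeight α n t • v α n)) atTop
      (𝓝 (if α = lam ∧ n = l then v lam l else 0)) := by
    intro α hα n _
    by_cases hαn : α = lam ∧ n = l
    · obtain ⟨rfl, rfl⟩ := hαn
      rw [if_pos ⟨rfl, rfl⟩]
      refine tendsto_const_nhds.congr' ?_
      filter_upwards [eventually_gt_atTop 0] with t ht
      rw [smul_smul, inv_mul_cancel₀ (expPolyWeight_pos _ _ ht).ne', one_smul]
    rw [if_neg hαn]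
    by_cases hv : v α n = 0
    · simpa only [hv, smul_zero] using tendsto_const_nhds
    have hlt : α < lam ∨ α = lam ∧ n < l := by
      rcases hdom α hα n hv with h | ⟨rfl, h⟩
      exacts [Or.inl h, Or.inr ⟨rfl, h.lt_of_ne fun h' => hαn ⟨rfl, h'⟩⟩]
    simpa [smul_smul, div_eq_inv_mul] using
      (tendsto_expPolyWeight_div_expPolyWeight hlt).smul_const (v α n)
  have := tendsto_finsetSum S fun α hα => tendsto_finsetSum _ fun n hn => hterm α hα n hn
  simpa [ite_and, Finset.sum_ite_eq', hlam, hl, Finset.smul_sum] using this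

theorem tendsto_norm_div_of_tendsto_inv_smul {ι : Type*} {l : Filter ι} {f : ι → V} {D : ι → ℝ}
    {Z : V} (hD : ∀ᶠ i in l, 0 < D i) (h : Tendsto (fun i => (D i)⁻¹ • f i) l (𝓝 Z)) :
    Tendsto (fun i => ‖f i‖ / D i) l (𝓝 ‖Z‖) := by
  refine h.norm.congr' ?_
  filter_upwards [hD] with i hDi
  rw [norm_smul, norm_inv, Real.norm_of_nonneg hDi.le, inv_mul_eq_div]

end

theorem tendsto_log_div_of_tendsto_div {g D : ℝ → ℝ} {c lam : ℝ} (hc : 0 < c)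
    (hD : ∀ᶠ t in atTop, 0 < D t) (hlog : Tendsto (fun t => Real.log (D t) / t) atTop (𝓝 lam))
    (h : Tendsto (fun t => g t / D t) atTop (𝓝 c)) :
    Tendsto (fun t => Real.log (g t) / t) atTop (𝓝 lam) := by
  have hrest : Tendsto (fun t => Real.log (g t / D t) / t) atTop (𝓝 0) :=
    ((Real.continuousAt_log hc.ne').tendsto.comp h).div_atTop tendsto_id
  have := hlog.add hrest
  rw [add_zero] at this
  refine this.congr' ?_
  filter_upwards [hD, h.eventually (eventually_gt_nhds hc)] with t hDt hgt
  rw [← add_div, ← Real.log_mul hDt.ne' hgt.ne', mul_div_cancel₀ _ hDt.ne']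

theorem growth_rate_exp_nilpotent_hyperbolic_general
    {V : Type*} [NormedAddCommGroup V] [InnerProductSpace ℝ V]
    [FiniteDimensional ℝ V]
    (N H : V →L[ℝ] V) (hN : IsNilpotent N)
    (S : Finset ℝ) (comp : ℝ → V)
    (heig : ∀ α ∈ S, H (comp α) = α • comp α)
    (X : V) (hXsum : X = ∑ α ∈ S, comp α)
    (lam : ℝ) (hlamS : lam ∈ S)
    (hlammax : ∀ α ∈ S, comp α ≠ 0 → α ≤ lam)
    (l : ℕ) (hl : (N ^ l) (comp lam) ≠ 0) (hl1 : (N ^ (l + 1)) (comp lam) = 0) :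
    Tendsto (fun t : ℝ =>
        ‖NormedSpace.exp (t • N) (NormedSpace.exp (t • H) X)‖ /
          ((Real.exp (lam * t) * t ^ l / (Nat.factorial l)) * ‖(N ^ l) (comp lam)‖))
      atTop (𝓝 1) ∧
    Tendsto (fun t : ℝ =>
        (1 / t) * Real.log ‖NormedSpace.exp (t • N) (NormedSpace.exp (t • H) X)‖) atTop (𝓝 lam) := by
  obtain ⟨m, hm⟩ := hN
  have hlm : l < m := by
    by_contra! h
    exact hl (by rw [pow_eq_zero_of_le h hm, zero_apply])
  have hdom : ∀ α ∈ S, ∀ n, (N ^ n) (comp α) ≠ 0 → α < lam ∨ α = lam ∧ n ≤ l := by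
    intro α hα n hv
    rcases (hlammax α hα fun h => hv (by rw [h, map_zero])).lt_or_eq with hlt | rfl
    · exact Or.inl hlt
    refine Or.inr ⟨rfl, not_lt.1 fun hln => hv ?_⟩
    rw [← pow_sub_mul_pow N hln, mul_apply_eq_comp, hl1, map_zero]
  have hD : ∀ᶠ t in atTop, 0 < expPolyWeight lam l t :=
    (eventually_gt_atTop 0).mono fun _ => expPolyWeight_pos lam l
  have hratio : Tendsto (fun t => ‖exp (t • N) (exp (t • H) X)‖ / expPolyWeight lam l t) atTop
      (𝓝 ‖(N ^ l) (comp lam)‖) := tendsto_norm_div_of_tendsto_inv_smul hD <| by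
    simpa only [hXsum, exp_smul_apply_exp_smul_apply_sum hm heig] using
      tendsto_inv_expPolyWeight_smul_sum hlamS hlm hdom
  constructor
  · have := hratio.div_const ‖(N ^ l) (comp lam)‖
    rw [div_self (norm_ne_zero_iff.2 hl)] at this
    simp only [div_div] at this
    exact this
  · simpa only [one_div_mul_eq_div] using tendsto_log_div_of_tendsto_div (norm_pos_iff.2 hl) hD
      (tendsto_log_expPolyWeight_div lam l) hratio

/-- Growth rate of `exp(tN) exp(tH) X` where `N` is nilpotent, `H` is
diagonalizable with real eigenvalues and `X = ∑ X_α` in eigencomponents. -/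
theorem growth_rate_exp_nilpotent_hyperbolic
    {V : Type*} [NormedAddCommGroup V] [InnerProductSpace ℝ V]
    [FiniteDimensional ℝ V]
    (N H : V →L[ℝ] V) (hN : IsNilpotent N)
    (S : Finset ℝ) (comp : ℝ → V)
    (heig : ∀ α ∈ S, H (comp α) = α • comp α)
    (X : V) (hX : X ≠ 0) (hXsum : X = ∑ α ∈ S, comp α)
    (lam : ℝ) (hlamS : lam ∈ S) (hlamne : comp lam ≠ 0)
    (hlammax : ∀ α ∈ S, comp α ≠ 0 → α ≤ lam)
    (l : ℕ) (hl : (N ^ l) (comp lam) ≠ 0) (hl1 : (N ^ (l + 1)) (comp lam) = 0) :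
    Tendsto (fun t : ℝ =>
        ‖NormedSpace.exp (t • N) (NormedSpace.exp (t • H) X)‖ /
          ((Real.exp (lam * t) * t ^ l / (Nat.factorial l)) * ‖(N ^ l) (comp lam)‖))
      atTop (𝓝 1) ∧
    Tendsto (fun t : ℝ =>
        (1 / t) * Real.log ‖NormedSpace.exp (t • N) (NormedSpace.exp (t • H) X)‖) atTop (𝓝 lam) :=
  growth_rate_exp_nilpotent_hyperbolic_general N H hN S comp heig X hXsum lam hlamS hlammax l hl hl1
end

section
/- Let (X, d) and (X̄, d̄) be metric spaces, φᵗ and φ̄ᵗ flows conjugated by a bi-Lipschitz map ψ (φ̄ᵗ = ψφᵗψ⁻¹), and M ⊆ X with M̄ = ψ(M). Then the metric spectra coincide: Λ(φᵗ, M) = Λ(φ̄ᵗ, M̄), where Λ(φᵗ, M) = {λ(φᵗ, x) : x metric regular}. -/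
/-!
A bi-Lipschitz conjugacy distorts the distance of an orbit point to `M` by at most the constant
factors `b` and `c`. After taking logarithms this is a bounded additive error, which disappears
when divided by `t`, so both orbits have the same exponential rate of approach.
-/

open Filter Topology Metric

def HasExpGrowthRate (f : ℝ → ℝ) (lam : ℝ) : Prop :=
  (∀ᶠ t in atTop, 0 < f t) ∧ Tendsto (fun t : ℝ => (1 / t) * Real.log (f t)) atTop (𝓝 lam)

/-- The metric spectrum `Λ(φᵗ, M)`. -/
def metricSpectrum {X : Type*} [MetricSpace X] (φ : ℝ → X → X) (M : Set X) : Set ℝ :=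
  {lam | ∃ x, HasExpGrowthRate (fun t => infDist (φ t x) M) lam}

theorem HasExpGrowthRate.of_le_of_le {f g : ℝ → ℝ} {b c lam : ℝ} (hf : HasExpGrowthRate f lam)
    (hb : 0 < b) (hc : 0 < c) (hbg : ∀ᶠ t in atTop, b * f t ≤ g t)
    (hgc : ∀ᶠ t in atTop, g t ≤ c * f t) : HasExpGrowthRate g lam := by
  have hshift (a : ℝ) :
      Tendsto (fun t : ℝ => (1 / t) * (Real.log a + Real.log (f t))) atTop (𝓝 lam) := by
    have hinv : Tendsto (fun t : ℝ => 1 / t) atTop (𝓝 0) := by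
      simpa only [one_div] using tendsto_inv_atTop_zero
    simpa only [mul_add, zero_mul, zero_add] using (hinv.mul_const (Real.log a)).add hf.2
  have hg : ∀ᶠ t in atTop, 0 < g t := by
    filter_upwards [hf.1, hbg] with t hft hbgt
    exact (mul_pos hb hft).trans_le hbgt
  refine ⟨hg, tendsto_of_tendsto_of_tendsto_of_le_of_le' (hshift b) (hshift c) ?_ ?_⟩
  · filter_upwards [hf.1, hbg, eventually_gt_atTop 0] with t hft hbgt ht
    gcongr
    rw [← Real.log_mul hb.ne' hft.ne']
    exact Real.log_le_log (mul_pos hb hft) hbgt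
  · filter_upwards [hf.1, hg, hgc, eventually_gt_atTop 0] with t hft hgt hgct ht
    gcongr
    rw [← Real.log_mul hc.ne' hft.ne']
    exact Real.log_le_log hgt hgct

theorem hasExpGrowthRate_congr_of_le_of_le {f g : ℝ → ℝ} {b c lam : ℝ} (hb : 0 < b) (hc : 0 < c)
    (hbg : ∀ᶠ t in atTop, b * f t ≤ g t) (hgc : ∀ᶠ t in atTop, g t ≤ c * f t) :
    HasExpGrowthRate g lam ↔ HasExpGrowthRate f lam := by
  refine ⟨fun hg => hg.of_le_of_le (inv_pos.2 hc) (inv_pos.2 hb) ?_ ?_,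
    fun hf => hf.of_le_of_le hb hc hbg hgc⟩
  · filter_upwards [hgc] with t ht
    exact (inv_mul_le_iff₀ hc).2 ht
  · filter_upwards [hbg] with t ht
    exact (le_inv_mul_iff₀ hb).2 ht

section InfDistImage

variable {X Y : Type*} [MetricSpace X] [MetricSpace Y] {f : X → Y}

theorem mul_infDist_le_infDist_image {b : ℝ} (hb : 0 ≤ b)
    (hf : ∀ x y, b * dist x y ≤ dist (f x) (f y)) (s : Set X) (z : X) :
    b * infDist z s ≤ infDist (f z) (f '' s) := by
  rcases s.eq_empty_or_nonempty with rfl | hs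
  · simp
  refine (le_infDist (hs.image f)).2 ?_
  rintro _ ⟨m, hm, rfl⟩
  calc b * infDist z s ≤ b * dist z m := by gcongr; exact infDist_le_dist_of_mem hm
    _ ≤ dist (f z) (f m) := hf z m

theorem infDist_image_le_mul {c : ℝ} (hc : 0 < c)
    (hf : ∀ x y, dist (f x) (f y) ≤ c * dist x y) (s : Set X) (z : X) :
    infDist (f z) (f '' s) ≤ c * infDist z s := by
  rcases s.eq_empty_or_nonempty with rfl | hs
  · simp
  rw [← div_le_iff₀' hc]
  refine (le_infDist hs).2 fun m hm => ?_
  rw [div_le_iff₀' hc]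
  exact (infDist_le_dist_of_mem (Set.mem_image_of_mem f hm)).trans (hf z m)

end InfDistImage

/-- Metric spectra are invariant under bi-Lipschitz conjugation of flows. -/
theorem metric_spectrum_biLipschitz_invariant
    {X Y : Type*} [MetricSpace X] [MetricSpace Y]
    (ψ : X ≃ Y) (b c : ℝ) (hb : 0 < b) (hc : 0 < c)
    (hlow : ∀ x y : X, b * dist x y ≤ dist (ψ x) (ψ y))
    (hupp : ∀ x y : X, dist (ψ x) (ψ y) ≤ c * dist x y)
    (φ : ℝ → X → X) (φbar : ℝ → Y → Y)
    (hconj : ∀ t : ℝ, ∀ y : Y, φbar t y = ψ (φ t (ψ.symm y)))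
    (M : Set X) :
    {lam : ℝ | ∃ x : X, (∀ᶠ t in atTop, 0 < infDist (φ t x) M) ∧
        Tendsto (fun t : ℝ => (1 / t) * Real.log (infDist (φ t x) M))
          atTop (𝓝 lam)} =
    {lam : ℝ | ∃ y : Y, (∀ᶠ t in atTop, 0 < infDist (φbar t y) (ψ '' M)) ∧
        Tendsto (fun t : ℝ => (1 / t) * Real.log (infDist (φbar t y) (ψ '' M)))
          atTop (𝓝 lam)} := by
  change metricSpectrum φ M = metricSpectrum φbar (ψ '' M)
  have hsemiconj (t : ℝ) (x : X) : φbar t (ψ x) = ψ (φ t x) := by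
    rw [hconj, ψ.symm_apply_apply]
  have hrate (x : X) (lam : ℝ) :
      HasExpGrowthRate (fun t => infDist (φbar t (ψ x)) (ψ '' M)) lam ↔
        HasExpGrowthRate (fun t => infDist (φ t x) M) lam := by
    simp only [hsemiconj]
    exact hasExpGrowthRate_congr_of_le_of_le hb hc
      (.of_forall fun t => mul_infDist_le_infDist_image hb.le hlow M (φ t x))
      (.of_forall fun t => infDist_image_le_mul hc hupp M (φ t x))
  ext lam
  exact (ψ.surjective.exists.trans (exists_congr fun x => hrate x lam)).symm
end
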